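/- arXiv:1004.4058 — 3 statements merged into one kernel-verified Lean document; each statement's English description precedes it below -/
import Mathlib

section
/- Let M be a Kähler manifold of real dimension 2m ≥ 6. The Bochner curvature tensor of M vanishes if and only if for every point p ∈ M and all unit tangent vectors x, y, z ∈ T_p M spanning an antiholomorphic 3-plane (i.e. x, Jx, y, Jy, z, Jz are pairwise orthogonal), one has R(x, Jx, y, z) = 2 R(x, y, Jx, z). -/
/-!
The Bochner tensor is `B = R - K(S) / (2(m + 2)) + τ K(g) / (8(m + 1)(m + 2))`, where `K(h)` is
the Kähler analogue of the Kulkarni–Nomizu product of the metric `g` with a `J`-invariant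
symmetric form `h`. Each `K(h)` is a Kähler curvature tensor satisfying
`K(x, Jx, y, z) = 2 K(x, y, Jx, z)` on antiholomorphic triples, with Ricci contraction
`(2m + 4) h + (tr h) g`. Hence `B` is a Ricci-flat Kähler curvature tensor, and `R` satisfies the
identity iff `B` does; unit vectors suffice since the identity is homogeneous.

Let now `T` be a Ricci-flat Kähler curvature tensor satisfying the identity, and `m ≥ 3`. On the
complex-orthogonal complement `W` of `x`, the identity makes `y ↦ T(x, y, x, Jy)` take equal
values on complex-orthogonal `y, y'` of equal norm; as `dim W ≥ 4` there is such a `w` for `y`,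
and comparing `y` with `w` and `Jw` shows that the form vanishes. Polarizing gives
`T(x, Jy, x, Jz) = T(x, y, x, z)` on `W`, hence `8 T(x, y, x, y) = H(x) + H(y)` for
complex-orthogonal unit vectors, `H` being the holomorphic sectional curvature. The Ricci trace in
an adapted basis `e_i, J e_i` then reads `(m + 2) H(e_i) + ∑ⱼ H(e_j) = 0`, so `H = 0`, and a
Kähler curvature tensor with vanishing holomorphic sectional curvature is zero.
-/

open scoped RealInnerProductSpace

/-- A compatible (orthogonal) complex structure on a real inner product space. -/
def IsComplexStructure {V : Type*} [NormedAddCommGroup V] [InnerProductSpace ℝ V]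
    (J : V →ₗ[ℝ] V) : Prop :=
  (∀ x, J (J x) = -x) ∧ ∀ x y : V, ⟪J x, J y⟫ = ⟪x, y⟫

/-- A (0,4) curvature-type tensor. -/
abbrev CurvTensor (V : Type*) [NormedAddCommGroup V] [InnerProductSpace ℝ V] :=
  V →ₗ[ℝ] V →ₗ[ℝ] V →ₗ[ℝ] V →ₗ[ℝ] ℝ

/-- An algebraic curvature tensor of Kähler type. -/
structure IsKahlerCurv {V : Type*} [NormedAddCommGroup V] [InnerProductSpace ℝ V]
    (J : V →ₗ[ℝ] V) (R : CurvTensor V) : Prop where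
  skew₁ : ∀ x y z u, R x y z u = - R y x z u
  skew₂ : ∀ x y z u, R x y z u = - R x y u z
  symm : ∀ x y z u, R x y z u = R z u x y
  bianchi : ∀ x y z u, R x y z u + R y z x u + R z x y u = 0
  kahler : ∀ x y z u, R x y z u = R x y (J z) (J u)

/-- The Ricci tensor of an algebraic curvature tensor. -/
noncomputable def ricciT {V : Type*} [NormedAddCommGroup V] [InnerProductSpace ℝ V]
    [FiniteDimensional ℝ V] (R : CurvTensor V) (y z : V) : ℝ :=
  ∑ i, R (stdOrthonormalBasis ℝ V i) y z (stdOrthonormalBasis ℝ V i)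

/-- The scalar curvature of an algebraic curvature tensor. -/
noncomputable def scalarT {V : Type*} [NormedAddCommGroup V] [InnerProductSpace ℝ V]
    [FiniteDimensional ℝ V] (R : CurvTensor V) : ℝ :=
  ∑ i, ricciT R (stdOrthonormalBasis ℝ V i) (stdOrthonormalBasis ℝ V i)

/-- The Bochner curvature tensor of a Kähler-type curvature tensor
(`2 * m` is the dimension). -/
noncomputable def bochnerT {V : Type*} [NormedAddCommGroup V] [InnerProductSpace ℝ V]
    [FiniteDimensional ℝ V] (m : ℕ) (J : V →ₗ[ℝ] V) (R : CurvTensor V)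
    (x y z u : V) : ℝ :=
  R x y z u
  - (1 / (2 * ((m : ℝ) + 2))) *
      ( ⟪x, u⟫ * ricciT R y z - ⟪x, z⟫ * ricciT R y u
      + ⟪y, z⟫ * ricciT R x u - ⟪y, u⟫ * ricciT R x z
      + ⟪x, J u⟫ * ricciT R y (J z) - ⟪x, J z⟫ * ricciT R y (J u)
      + ⟪y, J z⟫ * ricciT R x (J u) - ⟪y, J u⟫ * ricciT R x (J z)
      - 2 * ⟪x, J y⟫ * ricciT R z (J u) - 2 * ⟪z, J u⟫ * ricciT R x (J y) )
  + (scalarT R / (4 * ((m : ℝ) + 1) * ((m : ℝ) + 2))) *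
      ( ⟪x, u⟫ * ⟪y, z⟫ - ⟪x, z⟫ * ⟪y, u⟫
      + ⟪x, J u⟫ * ⟪y, J z⟫ - ⟪x, J z⟫ * ⟪y, J u⟫
      - 2 * ⟪x, J y⟫ * ⟪z, J u⟫ )

/-- `x, Jx, y, Jy, z, Jz` are pairwise orthogonal, i.e. `x, y, z` span an
antiholomorphic 3-plane. -/
def AntiholoTriple {V : Type*} [NormedAddCommGroup V] [InnerProductSpace ℝ V]
    (J : V →ₗ[ℝ] V) (x y z : V) : Prop :=
  ⟪x, y⟫ = 0 ∧ ⟪x, z⟫ = 0 ∧ ⟪y, z⟫ = 0 ∧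
  ⟪x, J x⟫ = 0 ∧ ⟪y, J y⟫ = 0 ∧ ⟪z, J z⟫ = 0 ∧
  ⟪x, J y⟫ = 0 ∧ ⟪x, J z⟫ = 0 ∧ ⟪y, J z⟫ = 0

/-- A `J`-adapted orthonormal family `{e i, J (e i)}`. -/
def IsAdaptedBasis {V : Type*} [NormedAddCommGroup V] [InnerProductSpace ℝ V]
    (J : V →ₗ[ℝ] V) {m : ℕ} (e : Fin m → V) : Prop :=
  (∀ i j, ⟪e i, e j⟫ = if i = j then 1 else 0) ∧ ∀ i j, ⟪e i, J (e j)⟫ = 0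



namespace IsComplexStructure

variable {V : Type*} [NormedAddCommGroup V] [InnerProductSpace ℝ V]
  {J : V →ₗ[ℝ] V} (hJ : IsComplexStructure J)
include hJ

lemma apply_apply (x : V) : J (J x) = -x := hJ.1 x

lemma inner_apply_apply (x y : V) : ⟪J x, J y⟫ = ⟪x, y⟫ := hJ.2 x y

lemma inner_apply_left (x y : V) : ⟪J x, y⟫ = -⟪x, J y⟫ := by
  have h := hJ.inner_apply_apply x (J y)
  rw [hJ.apply_apply, inner_neg_right] at h
  linarith

lemma inner_apply_right (x y : V) : ⟪x, J y⟫ = -⟪y, J x⟫ := by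
  rw [← real_inner_comm, hJ.inner_apply_left]

lemma inner_self_apply (x : V) : ⟪x, J x⟫ = 0 := by
  linarith [hJ.inner_apply_right x x]

lemma norm_apply (x : V) : ‖J x‖ = ‖x‖ := by
  simpa [real_inner_self_eq_norm_sq] using hJ.inner_apply_apply x x

noncomputable def toLinearIsometryEquiv : V ≃ₗᵢ[ℝ] V :=
  LinearEquiv.isometryOfInner
    { J with
      invFun := fun v => -J v
      left_inv := fun v => by simp [hJ.apply_apply]
      right_inv := fun v => by simp [hJ.apply_apply] }
    hJ.inner_apply_apply

@[simp] lemma toLinearIsometryEquiv_apply (x : V) : hJ.toLinearIsometryEquiv x = J x := rfl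

end IsComplexStructure

section Trace

variable {V : Type*} [NormedAddCommGroup V] [InnerProductSpace ℝ V] {ι : Type*} [Fintype ι]

lemma OrthonormalBasis.sum_inner_mul_apply (b : OrthonormalBasis ι ℝ V) (f : V →ₗ[ℝ] ℝ)
    (a : V) : ∑ i, ⟪b i, a⟫ * f (b i) = f a := by
  simpa using congrArg f (b.sum_repr' a)

variable [FiniteDimensional ℝ V]

lemma OrthonormalBasis.sum_bilin_self_eq_lift (b : OrthonormalBasis ι ℝ V)
    (F : V →ₗ[ℝ] V →ₗ[ℝ] ℝ) :
    ∑ i, F (b i) (b i) = TensorProduct.lift F (InnerProductSpace.canonicalCovariantTensor V) := by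
  simp [InnerProductSpace.canonicalCovariantTensor_eq_sum V b]

lemma ricciT_eq_sum (b : OrthonormalBasis ι ℝ V) (R : CurvTensor V) (y z : V) :
    ricciT R y z = ∑ i, R (b i) y z (b i) := by
  have h := (stdOrthonormalBasis ℝ V).sum_bilin_self_eq_lift ((R.flip y).flip z)
  rw [← b.sum_bilin_self_eq_lift] at h
  simpa [ricciT] using h

end Trace

section Ricci

variable {V : Type*} [NormedAddCommGroup V] [InnerProductSpace ℝ V] [FiniteDimensional ℝ V]

noncomputable def ricciForm (R : CurvTensor V) : LinearMap.BilinForm ℝ V :=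
  let b := stdOrthonormalBasis ℝ V
  ∑ i, (R (b i)).compr₂ (LinearMap.applyₗ (b i))

@[simp] lemma ricciForm_apply (R : CurvTensor V) (y z : V) : ricciForm R y z = ricciT R y z := by
  simp [ricciForm, ricciT]

@[simp] lemma ricciT_add (R R' : CurvTensor V) (y z : V) :
    ricciT (R + R') y z = ricciT R y z + ricciT R' y z := by
  simp [ricciT, Finset.sum_add_distrib]

@[simp] lemma ricciT_smul (c : ℝ) (R : CurvTensor V) (y z : V) :
    ricciT (c • R) y z = c * ricciT R y z := by
  simp [ricciT, Finset.mul_sum]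

end Ricci

section SectionalCurvature

variable {V : Type*} [NormedAddCommGroup V] [InnerProductSpace ℝ V]

lemma curvTensor_eq_zero_of_sectional_eq_zero {T : CurvTensor V}
    (hskew : ∀ x y z u, T x y z u = -T y x z u) (hsymm : ∀ x y z u, T x y z u = T z u x y)
    (hbianchi : ∀ x y z u, T x y z u + T y z x u + T z x y u = 0)
    (hsec : ∀ x y, T x y x y = 0) : T = 0 := by
  have h₁ : ∀ x y z, T x y z y = 0 := fun x y z => by
    have := hsec (x + z) y
    simp only [map_add, LinearMap.add_apply, hsec, hsymm z y x y] at this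
    linarith
  have h₂ : ∀ x y z u, T x y z u = -T x u z y := fun x y z u => by
    have := h₁ x (y + u) z
    simp only [map_add, LinearMap.add_apply, h₁] at this
    linarith
  have h₃ : ∀ x y z u, 2 * T x y z u = T x z y u := fun x y z u => by
    linarith [hbianchi x y z u, h₂ y z x u, hsymm y u x z, h₂ z x y u, hsymm z u y x,
      hskew y x z u]
  ext x y z u
  simp only [LinearMap.zero_apply]
  linarith [h₃ x y z u, h₃ x z y u]

end SectionalCurvature

namespace IsKahlerCurv

variable {V : Type*} [NormedAddCommGroup V] [InnerProductSpace ℝ V]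
  {J : V →ₗ[ℝ] V} {T T' : CurvTensor V}

lemma add (hT : IsKahlerCurv J T) (hT' : IsKahlerCurv J T') : IsKahlerCurv J (T + T') where
  skew₁ x y z u := by
    simp only [LinearMap.add_apply]; linarith [hT.skew₁ x y z u, hT'.skew₁ x y z u]
  skew₂ x y z u := by
    simp only [LinearMap.add_apply]; linarith [hT.skew₂ x y z u, hT'.skew₂ x y z u]
  symm x y z u := by
    simp only [LinearMap.add_apply]; linarith [hT.symm x y z u, hT'.symm x y z u]
  bianchi x y z u := by
    simp only [LinearMap.add_apply]; linarith [hT.bianchi x y z u, hT'.bianchi x y z u]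
  kahler x y z u := by
    simp only [LinearMap.add_apply]; linarith [hT.kahler x y z u, hT'.kahler x y z u]

lemma smul (hT : IsKahlerCurv J T) (c : ℝ) : IsKahlerCurv J (c • T) where
  skew₁ x y z u := by simp only [LinearMap.smul_apply, smul_eq_mul, hT.skew₁ x y z u]; ring
  skew₂ x y z u := by simp only [LinearMap.smul_apply, smul_eq_mul, hT.skew₂ x y z u]; ring
  symm x y z u := by simp only [LinearMap.smul_apply, smul_eq_mul, hT.symm x y z u]
  bianchi x y z u := by
    simp only [LinearMap.smul_apply, smul_eq_mul]; linear_combination c * hT.bianchi x y z u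
  kahler x y z u := by simp only [LinearMap.smul_apply, smul_eq_mul, hT.kahler x y z u]

variable (hT : IsKahlerCurv J T)
include hT

lemma apply_self₁₂ (x z u : V) : T x x z u = 0 := by linarith [hT.skew₁ x x z u]

lemma apply_self₃₄ (x y z : V) : T x y z z = 0 := by linarith [hT.skew₂ x y z z]

lemma J₁₂ (x y z u : V) : T (J x) (J y) z u = T x y z u := by
  rw [hT.symm, ← hT.kahler, hT.symm]

lemma ricciForm_comm [FiniteDimensional ℝ V] (y z : V) : ricciForm T y z = ricciForm T z y := by
  simp only [ricciForm_apply]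
  refine Finset.sum_congr rfl fun i _ => ?_
  rw [hT.symm, hT.skew₁, hT.skew₂, neg_neg]

lemma apply_J_apply_apply_J (x y : V) :
    T x (J y) y (J x) = T x (J x) y (J y) - T x y x y := by
  linarith [hT.bianchi x (J y) y (J x), hT.skew₁ (J y) y x (J x), hT.symm y (J y) x (J x),
    hT.kahler y x y x, hT.skew₁ y x y x, hT.skew₂ x y y x]

variable (hJ : IsComplexStructure J)
include hJ

lemma ricciForm_J_J [FiniteDimensional ℝ V] (y z : V) :
    ricciForm T (J y) (J z) = ricciForm T y z := by
  rw [ricciForm_apply, ricciForm_apply,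
    ricciT_eq_sum ((stdOrthonormalBasis ℝ V).map hJ.toLinearIsometryEquiv), ricciT]
  refine Finset.sum_congr rfl fun i _ => ?_
  simp only [OrthonormalBasis.map_apply, IsComplexStructure.toLinearIsometryEquiv_apply]
  rw [hT.J₁₂, ← hT.kahler]

lemma apply_J_apply_J_comm (x y : V) : T y (J x) y (J x) = T x (J y) x (J y) := by
  have h₁ := hT.J₁₂ y (J x) y (J x)
  have h₂ := hT.kahler (J y) x y (J x)
  simp only [hJ.apply_apply, map_neg, LinearMap.neg_apply] at h₁ h₂
  linarith [hT.skew₁ (J y) x (J y) x, hT.skew₂ x (J y) (J y) x]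

lemma bisectional_eq (x y : V) :
    T x (J x) y (J y) = T x y x y + T x (J y) x (J y) := by
  have h := hT.J₁₂ y (J x) y (J x)
  simp only [hJ.apply_apply, map_neg, LinearMap.neg_apply] at h
  linarith [hT.bianchi x y (J y) (J x), hT.kahler x y y x, hT.skew₂ x y y x,
    hT.symm y (J y) x (J x), hT.apply_J_apply_J_comm hJ x y]

lemma apply_J_sub_two_mul (x y z : V) :
    T x (J x) y z - 2 * T x y (J x) z = T x y x (J z) + T x (J y) x z := by
  have h₁ := hT.J₁₂ x (J y) x z
  have h₂ := hT.kahler x y (J x) z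
  simp only [hJ.apply_apply, map_neg, LinearMap.neg_apply] at h₁ h₂
  linarith [hT.bianchi x (J x) y z, hT.skew₁ y x (J x) z]

lemma sectional_eq_zero_of_holSec_eq_zero (h : ∀ x, T x (J x) x (J x) = 0) (x y : V) :
    T x y x y = 0 := by
  have hpol : ∀ x y : V,
      T x (J x) y (J y) + T x (J y) x (J y) + T x (J y) y (J x) = 0 := fun x y => by
    have h₁ := h (x + y)
    have h₂ := h (x + (-1 : ℝ) • y)
    simp only [map_add, map_smul, LinearMap.add_apply, LinearMap.smul_apply, smul_eq_mul,
      h x, h y] at h₁ h₂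
    linarith [hT.symm y (J y) x (J x), hT.apply_J_apply_J_comm hJ x y, hT.symm y (J x) x (J y),
      hT.symm x (J y) x (J x), hT.symm y (J x) x (J x), hT.symm y (J x) y (J y),
      hT.symm x (J y) y (J y), hT.symm y (J y) x (J y)]
  have h₁ := hpol x (J y)
  have h₂ := hT.apply_J_apply_apply_J x (J y)
  simp only [hJ.apply_apply, map_neg, LinearMap.neg_apply, neg_neg] at h₁ h₂
  linarith [hpol x y, hT.bisectional_eq hJ x y, hT.apply_J_apply_apply_J x y,
    hT.skew₂ x (J x) (J y) y]

lemma eq_zero_of_holSec_eq_zero (h : ∀ x, T x (J x) x (J x) = 0) : T = 0 :=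
  curvTensor_eq_zero_of_sectional_eq_zero hT.skew₁ hT.symm hT.bianchi
    (hT.sectional_eq_zero_of_holSec_eq_zero hJ h)

end IsKahlerCurv

section AntiholoIdentity

variable {V : Type*} [NormedAddCommGroup V] [InnerProductSpace ℝ V]

def AntiholoIdentity (J : V →ₗ[ℝ] V) (T : CurvTensor V) : Prop :=
  ∀ x y z, AntiholoTriple J x y z → T x (J x) y z = 2 * T x y (J x) z

variable {J : V →ₗ[ℝ] V}

lemma AntiholoTriple.smul {x y z : V} (h : AntiholoTriple J x y z) (a b c : ℝ) :
    AntiholoTriple J (a • x) (b • y) (c • z) := by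
  obtain ⟨h₁, h₂, h₃, h₄, h₅, h₆, h₇, h₈, h₉⟩ := h
  refine ⟨?_, ?_, ?_, ?_, ?_, ?_, ?_, ?_, ?_⟩ <;>
    simp only [map_smul, real_inner_smul_left, real_inner_smul_right, *, mul_zero]

lemma antiholoIdentity_of_unit {T : CurvTensor V}
    (hT : ∀ x y z, ‖x‖ = 1 → ‖y‖ = 1 → ‖z‖ = 1 → AntiholoTriple J x y z →
      T x (J x) y z = 2 * T x y (J x) z) :
    AntiholoIdentity J T := by
  intro x y z h
  rcases eq_or_ne x 0 with rfl | hx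
  · simp
  rcases eq_or_ne y 0 with rfl | hy
  · simp
  rcases eq_or_ne z 0 with rfl | hz
  · simp
  have key := hT _ _ _ (norm_smul_inv_norm hx) (norm_smul_inv_norm hy) (norm_smul_inv_norm hz)
    (h.smul _ _ _)
  simp only [map_smul, LinearMap.smul_apply, smul_eq_mul] at key
  have hc : ‖x‖⁻¹ * ‖x‖⁻¹ * ‖y‖⁻¹ * ‖z‖⁻¹ ≠ 0 := by simp [hx, hy, hz]
  exact mul_left_cancel₀ hc (by linear_combination key)

end AntiholoIdentity

section KahlerProduct

variable {V : Type*} [NormedAddCommGroup V] [InnerProductSpace ℝ V]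

noncomputable def kahlerProduct (J : V →ₗ[ℝ] V) (h : LinearMap.BilinForm ℝ V) :
    CurvTensor V :=
  LinearMap.mk₂ ℝ
    (fun x y => LinearMap.mk₂ ℝ
      (fun z u =>
        ⟪x, u⟫ * h y z - ⟪x, z⟫ * h y u + ⟪y, z⟫ * h x u - ⟪y, u⟫ * h x z
        + ⟪x, J u⟫ * h y (J z) - ⟪x, J z⟫ * h y (J u)
        + ⟪y, J z⟫ * h x (J u) - ⟪y, J u⟫ * h x (J z)
        - 2 * ⟪x, J y⟫ * h z (J u) - 2 * ⟪z, J u⟫ * h x (J y))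
      (fun _ _ _ => by
        simp only [map_add, inner_add_right, inner_add_left, LinearMap.add_apply]; ring)
      (fun _ _ _ => by simp only [map_smul, inner_smul_right, inner_smul_left, LinearMap.smul_apply,
        smul_eq_mul, RCLike.conj_to_real]; ring)
      (fun _ _ _ => by simp only [map_add, inner_add_right]; ring)
      (fun _ _ _ => by simp only [map_smul, inner_smul_right, smul_eq_mul]; ring))
    (fun _ _ _ => by
      ext; simp only [map_add, inner_add_left, LinearMap.add_apply, LinearMap.mk₂_apply]; ring)
    (fun _ _ _ => by
      ext; simp only [map_smul, inner_smul_left, LinearMap.smul_apply, LinearMap.mk₂_apply,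
        smul_eq_mul, RCLike.conj_to_real]; ring)
    (fun _ _ _ => by
      ext; simp only [map_add, inner_add_left, inner_add_right, LinearMap.add_apply,
        LinearMap.mk₂_apply]; ring)
    (fun _ _ _ => by
      ext; simp only [map_smul, inner_smul_left, inner_smul_right, LinearMap.smul_apply,
        LinearMap.mk₂_apply, smul_eq_mul, RCLike.conj_to_real]; ring)

@[simp] lemma kahlerProduct_apply (J : V →ₗ[ℝ] V) (h : LinearMap.BilinForm ℝ V)
    (x y z u : V) :
    kahlerProduct J h x y z u =
      ⟪x, u⟫ * h y z - ⟪x, z⟫ * h y u + ⟪y, z⟫ * h x u - ⟪y, u⟫ * h x z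
      + ⟪x, J u⟫ * h y (J z) - ⟪x, J z⟫ * h y (J u)
      + ⟪y, J z⟫ * h x (J u) - ⟪y, J u⟫ * h x (J z)
      - 2 * ⟪x, J y⟫ * h z (J u) - 2 * ⟪z, J u⟫ * h x (J y) := rfl

variable {J : V →ₗ[ℝ] V} (hJ : IsComplexStructure J) {h : LinearMap.BilinForm ℝ V}
include hJ

lemma antiholoIdentity_kahlerProduct : AntiholoIdentity J (kahlerProduct J h) := by
  intro x y z hxyz
  obtain ⟨hxy, hxz, hyz, -, -, -, hxJy, hxJz, hyJz⟩ := hxyz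
  simp only [kahlerProduct_apply, hJ.apply_apply, inner_neg_right, hJ.inner_apply_apply,
    hJ.inner_apply_left, hJ.inner_self_apply, real_inner_comm x y, hJ.inner_apply_right y x,
    hxy, hxz, hyz, hxJy, hxJz, hyJz]
  ring

variable (hsymm : ∀ y z, h y z = h z y) (hinv : ∀ y z, h (J y) (J z) = h y z)
include hsymm hinv

lemma apply_J_antisymm (y z : V) : h y (J z) = -h z (J y) := by
  rw [← hinv y (J z), hJ.apply_apply, map_neg, hsymm]

lemma isKahlerCurv_kahlerProduct : IsKahlerCurv J (kahlerProduct J h) where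
  skew₁ x y z u := by
    simp only [kahlerProduct_apply]
    rw [hJ.inner_apply_right y x, apply_J_antisymm hJ hsymm hinv y x]
    ring
  skew₂ x y z u := by
    simp only [kahlerProduct_apply]
    rw [hJ.inner_apply_right u z, apply_J_antisymm hJ hsymm hinv u z]
    ring
  symm x y z u := by
    simp only [kahlerProduct_apply]
    rw [real_inner_comm z x, real_inner_comm z y, real_inner_comm u x, real_inner_comm u y,
      hsymm x u, hsymm y u, hsymm x z, hsymm y z,
      hJ.inner_apply_right z x, hJ.inner_apply_right z y, hJ.inner_apply_right u x,
      hJ.inner_apply_right u y, apply_J_antisymm hJ hsymm hinv z x,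
      apply_J_antisymm hJ hsymm hinv z y, apply_J_antisymm hJ hsymm hinv u x,
      apply_J_antisymm hJ hsymm hinv u y]
    ring
  bianchi x y z u := by
    simp only [kahlerProduct_apply]
    rw [real_inner_comm y x, real_inner_comm z x, real_inner_comm z y,
      hsymm y x, hsymm z x, hsymm z y,
      hJ.inner_apply_right y x, hJ.inner_apply_right z x, hJ.inner_apply_right z y,
      apply_J_antisymm hJ hsymm hinv y x, apply_J_antisymm hJ hsymm hinv z x,
      apply_J_antisymm hJ hsymm hinv z y]
    ring
  kahler x y z u := by
    simp only [kahlerProduct_apply, hJ.apply_apply, map_neg, inner_neg_right,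
      hJ.inner_apply_left z u]
    rw [hsymm (J z) u, apply_J_antisymm hJ hsymm hinv u z]
    ring

lemma ricciT_kahlerProduct [FiniteDimensional ℝ V] (y z : V) :
    ricciT (kahlerProduct J h) y z =
      (Module.finrank ℝ V + 4) * h y z
        + (∑ i, h (stdOrthonormalBasis ℝ V i) (stdOrthonormalBasis ℝ V i)) * ⟪y, z⟫ := by
  set b := stdOrthonormalBasis ℝ V
  have e₁ : ∑ i, ⟪b i, z⟫ * h y (b i) = h y z := b.sum_inner_mul_apply (h y) z
  have e₂ : ∑ i, ⟪b i, y⟫ * h (b i) z = h y z := b.sum_inner_mul_apply (h.flip z) y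
  have e₃ : ∑ i, ⟪b i, J z⟫ * h y (J (b i)) = -h y z := by
    simpa [hJ.apply_apply] using b.sum_inner_mul_apply ((h y).comp J) (J z)
  have e₄ : ∑ i, ⟪b i, J y⟫ * h (b i) (J z) = h y z := by
    simpa [hinv] using b.sum_inner_mul_apply (h.flip (J z)) (J y)
  have e₅ : ∑ i, ⟪b i, J y⟫ * h z (J (b i)) = -h y z := by
    simpa [hJ.apply_apply, hsymm z y] using b.sum_inner_mul_apply ((h z).comp J) (J y)
  have e₆ : ∑ i, ⟪b i, J z⟫ * h (b i) (J y) = h y z := by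
    simpa [hinv, hsymm z y] using b.sum_inner_mul_apply (h.flip (J y)) (J z)
  have hterm : ∀ i, kahlerProduct J h (b i) y z (b i) =
      h y z + h (b i) (b i) * ⟪y, z⟫ - ⟪b i, z⟫ * h y (b i) - ⟪b i, y⟫ * h (b i) z
        - ⟪b i, J z⟫ * h y (J (b i)) + ⟪b i, J y⟫ * h (b i) (J z)
        - 2 * (⟪b i, J y⟫ * h z (J (b i))) + 2 * (⟪b i, J z⟫ * h (b i) (J y)) := by
    intro i
    have hself : h (b i) (J (b i)) = 0 := by
      linarith [apply_J_antisymm hJ hsymm hinv (b i) (b i)]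
    simp only [kahlerProduct_apply, real_inner_self_eq_norm_sq, b.norm_eq_one, hJ.inner_self_apply,
      hself, real_inner_comm (b i), hJ.inner_apply_right y (b i), hJ.inner_apply_right z (b i)]
    ring
  rw [ricciT, Finset.sum_congr rfl fun i _ => hterm i]
  simp only [Finset.sum_add_distrib, Finset.sum_sub_distrib, ← Finset.mul_sum, ← Finset.sum_mul,
    e₁, e₂, e₃, e₄, e₅, e₆, Finset.sum_const, Finset.card_univ, Fintype.card_fin,
    nsmul_eq_mul]
  ring

end KahlerProduct

section Bochner

variable {V : Type*} [NormedAddCommGroup V] [InnerProductSpace ℝ V] [FiniteDimensional ℝ V]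

-- `kahlerProduct J (innerₗ V)` is twice the bracket multiplying `scalarT R` in `bochnerT`.
noncomputable def bochnerTensor (m : ℕ) (J : V →ₗ[ℝ] V) (R : CurvTensor V) : CurvTensor V :=
  R + (-1 / (2 * ((m : ℝ) + 2))) • kahlerProduct J (ricciForm R)
    + (scalarT R / (4 * ((m : ℝ) + 1) * ((m : ℝ) + 2)) / 2) • kahlerProduct J (innerₗ V)

@[simp] lemma bochnerTensor_apply (m : ℕ) (J : V →ₗ[ℝ] V) (R : CurvTensor V) (x y z u : V) :
    bochnerTensor m J R x y z u = bochnerT m J R x y z u := by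
  simp only [bochnerTensor, bochnerT, LinearMap.add_apply, LinearMap.smul_apply, smul_eq_mul,
    kahlerProduct_apply, ricciForm_apply, innerₗ_apply_apply]
  ring

variable {m : ℕ} {J : V →ₗ[ℝ] V} (hJ : IsComplexStructure J) {R : CurvTensor V}
  (hR : IsKahlerCurv J R)
include hJ

lemma antiholoIdentity_bochnerTensor_iff :
    AntiholoIdentity J (bochnerTensor m J R) ↔ AntiholoIdentity J R := by
  refine forall₃_congr fun x y z => imp_congr_right fun h => ?_
  simp only [bochnerTensor, LinearMap.add_apply, LinearMap.smul_apply, smul_eq_mul,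
    antiholoIdentity_kahlerProduct hJ x y z h]
  constructor <;> intro H <;> linarith

include hR

lemma isKahlerCurv_bochnerTensor : IsKahlerCurv J (bochnerTensor m J R) :=
  (hR.add ((isKahlerCurv_kahlerProduct hJ hR.ricciForm_comm
    (hR.ricciForm_J_J hJ)).smul _)).add
    ((isKahlerCurv_kahlerProduct hJ (fun y z => real_inner_comm z y) hJ.inner_apply_apply).smul _)

lemma ricciT_bochnerTensor (hdim : Module.finrank ℝ V = 2 * m) (y z : V) :
    ricciT (bochnerTensor m J R) y z = 0 := by
  simp only [bochnerTensor, ricciT_add, ricciT_smul]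
  rw [ricciT_kahlerProduct hJ hR.ricciForm_comm (hR.ricciForm_J_J hJ),
    ricciT_kahlerProduct hJ (fun y z => real_inner_comm z y) hJ.inner_apply_apply]
  have hτ : ∑ i, ricciT R (stdOrthonormalBasis ℝ V i) (stdOrthonormalBasis ℝ V i) =
      scalarT R := rfl
  simp only [ricciForm_apply, innerₗ_apply_apply, real_inner_self_eq_norm_sq,
    OrthonormalBasis.norm_eq_one, hτ, one_pow, Finset.sum_const, Finset.card_univ,
    Fintype.card_fin, nsmul_eq_mul, mul_one, hdim]
  push_cast
  field_simp
  ring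

end Bochner

section AdaptedBasis

variable {V : Type*} [NormedAddCommGroup V] [InnerProductSpace ℝ V]

lemma exists_norm_eq_one_inner_eq_zero [FiniteDimensional ℝ V] {ι : Type*} [Fintype ι]
    (v : ι → V) (h : Fintype.card ι < Module.finrank ℝ V) :
    ∃ w : V, ‖w‖ = 1 ∧ ∀ i, ⟪v i, w⟫ = 0 := by
  set K := Submodule.span ℝ (Set.range v)
  have hK : K ≠ ⊤ := fun hK => by
    have : Module.finrank ℝ K < Module.finrank ℝ V := (finrank_range_le_card v).trans_lt h
    rw [hK, finrank_top] at this
    exact lt_irrefl _ this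
  obtain ⟨w, hwK, hw⟩ := Submodule.exists_mem_ne_zero_of_ne_bot
    (mt Submodule.orthogonal_eq_bot_iff.mp hK)
  refine ⟨‖w‖⁻¹ • w, norm_smul_inv_norm hw, fun i => ?_⟩
  exact (Submodule.mem_orthogonal K _).mp (Kᗮ.smul_mem _ hwK) _
    (Submodule.subset_span (Set.mem_range_self i))

variable {J : V →ₗ[ℝ] V} (hJ : IsComplexStructure J)
include hJ

lemma IsAdaptedBasis.snoc {k : ℕ} {e : Fin k → V} (he : IsAdaptedBasis J e) {w : V}
    (hw : ‖w‖ = 1) (hew : ∀ i, ⟪e i, w⟫ = 0) (hJew : ∀ i, ⟪J (e i), w⟫ = 0) :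
    IsAdaptedBasis J (Fin.snoc e w : Fin (k + 1) → V) := by
  constructor <;> intro i j
  · induction i using Fin.lastCases <;> induction j using Fin.lastCases <;>
      simp [hw, he.1, hew, fun i => real_inner_comm (e i) w, Fin.castSucc_ne_last,
        (Fin.castSucc_ne_last _).symm]
  · induction i using Fin.lastCases <;> induction j using Fin.lastCases <;>
      simp [hJ.inner_self_apply, he.2, hJew, fun i => real_inner_comm (J (e i)) w,
        hJ.inner_apply_right _ w]

variable [FiniteDimensional ℝ V]

lemma exists_isAdaptedBasis {m : ℕ} (hdim : Module.finrank ℝ V = 2 * m) (hm : 0 < m)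
    {x : V} (hx : ‖x‖ = 1) : ∃ e : Fin m → V, IsAdaptedBasis J e ∧ ∃ i, e i = x := by
  obtain ⟨n, rfl⟩ : ∃ n, m = n + 1 := ⟨m - 1, by omega⟩
  suffices ∀ k ≤ n, ∃ e : Fin (k + 1) → V, IsAdaptedBasis J e ∧ ∃ i, e i = x from
    this n le_rfl
  intro k hk
  induction k with
  | zero =>
    refine ⟨fun _ => x, ⟨fun i j => ?_, fun _ _ => hJ.inner_self_apply x⟩, 0, rfl⟩
    obtain rfl : i = j := Fin.ext (by omega)
    simp [hx]
  | succ k ih =>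
    obtain ⟨e, he, i, rfl⟩ := ih (by omega)
    obtain ⟨w, hw, hew⟩ := exists_norm_eq_one_inner_eq_zero (Sum.elim e (J ∘ e))
      (by simp [hdim]; omega)
    exact ⟨_, he.snoc hJ hw (fun j => hew (.inl j)) (fun j => hew (.inr j)), i.castSucc,
      Fin.snoc_castSucc ..⟩

lemma IsAdaptedBasis.ricciT_eq_sum {m : ℕ} (hdim : Module.finrank ℝ V = 2 * m) {e : Fin m → V}
    (he : IsAdaptedBasis J e) (T : CurvTensor V) (y z : V) :
    ricciT T y z = ∑ i, (T (e i) y z (e i) + T (J (e i)) y z (J (e i))) := by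
  let f : Fin m × Bool → V := fun p => cond p.2 (J (e p.1)) (e p.1)
  have hf : Orthonormal ℝ f := by
    rw [orthonormal_iff_ite]
    rintro ⟨i, _ | _⟩ ⟨j, _ | _⟩ <;>
      simp [f, he.1, he.2, hJ.inner_apply_apply, hJ.inner_apply_left]
  have hcard : Fintype.card (Fin m × Bool) = Module.finrank ℝ V := by simp [hdim, mul_comm]
  let b := OrthonormalBasis.mk hf (hf.linearIndependent.span_eq_top_of_card_eq_finrank' hcard).ge
  rw [_root_.ricciT_eq_sum b, Fintype.sum_prod_type]
  simp [b, f, add_comm]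

end AdaptedBasis

namespace AntiholoIdentity

variable {V : Type*} [NormedAddCommGroup V] [InnerProductSpace ℝ V] {J : V →ₗ[ℝ] V}
  {T : CurvTensor V} (hA : AntiholoIdentity J T) (hT : IsKahlerCurv J T)
  (hJ : IsComplexStructure J)
include hA hT hJ

lemma apply_apply_J_eq {x y y' : V} (hxy : ⟪x, y⟫ = 0) (hxJy : ⟪x, J y⟫ = 0)
    (hxy' : ⟪x, y'⟫ = 0) (hxJy' : ⟪x, J y'⟫ = 0) (hyJy' : ⟪y, J y'⟫ = 0)
    (hnorm : ‖y‖ = ‖y'‖) :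
    T x y x (J y) = T x y' x (J y') := by
  have hy'Jy : ⟪y', J y⟫ = 0 := by rw [hJ.inner_apply_right, hyJy', neg_zero]
  have hyy : ⟪y, y⟫ = ⟪y', y'⟫ := by simp [hnorm]
  have htriple : AntiholoTriple J x (y + y') (y - y') := by
    refine ⟨?_, ?_, ?_, hJ.inner_self_apply _, hJ.inner_self_apply _, hJ.inner_self_apply _,
      ?_, ?_, ?_⟩ <;>
      simp only [map_add, map_sub, inner_add_left, inner_add_right, inner_sub_right,
        hJ.inner_self_apply] <;>
      linarith [real_inner_comm y y']
  have h := hA x (y + y') (y - y') htriple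
  rw [← sub_eq_zero, hT.apply_J_sub_two_mul hJ] at h
  simp only [map_add, map_sub, LinearMap.add_apply] at h
  linarith [hT.symm x (J y') x y, hT.symm x (J y) x y', hT.symm x (J y) x y,
    hT.symm x (J y') x y']

lemma apply_apply_J_eq_zero [FiniteDimensional ℝ V] (hdim : 4 < Module.finrank ℝ V) {x y : V}
    (hxy : ⟪x, y⟫ = 0) (hxJy : ⟪x, J y⟫ = 0) :
    T x y x (J y) = 0 := by
  obtain ⟨w, hw, hxw, hJxw, hyw, hJyw⟩ : ∃ w : V, ‖w‖ = 1 ∧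
      ⟪x, w⟫ = 0 ∧ ⟪x, J w⟫ = 0 ∧ ⟪y, w⟫ = 0 ∧ ⟪y, J w⟫ = 0 := by
    obtain ⟨w, hw, h⟩ := exists_norm_eq_one_inner_eq_zero ![x, J x, y, J y]
      (by simpa using hdim)
    simp only [Fin.forall_fin_succ, Matrix.cons_val_zero,
      Matrix.cons_val_succ, hJ.inner_apply_left] at h
    exact ⟨w, hw, h.1, neg_eq_zero.mp h.2.1, h.2.2.1, neg_eq_zero.mp h.2.2.2.1⟩
  -- `q v := T x v x (J v)` takes the same value at `y`, `w'` and `J w'`, but `q (J w') = -q w'`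
  set w' := ‖y‖ • w
  have hw' : ‖w'‖ = ‖y‖ := by simp [w', norm_smul, hw]
  have e₁ := hA.apply_apply_J_eq hT hJ (y' := w') hxy hxJy (by simp [w', inner_smul_right, hxw])
    (by simp [w', inner_smul_right, hJxw]) (by simp [w', inner_smul_right, hJyw]) hw'.symm
  have e₂ := hA.apply_apply_J_eq hT hJ (y' := J w') hxy hxJy
    (by simp [w', inner_smul_right, hJxw])
    (by simp [w', inner_smul_right, hJ.apply_apply, hxw])
    (by simp [w', inner_smul_right, hJ.apply_apply, hyw]) (by rw [hJ.norm_apply, hw'])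
  rw [hJ.apply_apply, map_neg] at e₂
  linarith [hT.symm x (J w') x w']

lemma apply_J_apply_J [FiniteDimensional ℝ V] (hdim : 4 < Module.finrank ℝ V)
    {x y z : V} (hxy : ⟪x, y⟫ = 0) (hxJy : ⟪x, J y⟫ = 0) (hxz : ⟪x, z⟫ = 0)
    (hxJz : ⟪x, J z⟫ = 0) :
    T x (J y) x (J z) = T x y x z := by
  have hq : ∀ v, ⟪x, v⟫ = 0 → ⟪x, J v⟫ = 0 → T x v x (J v) = 0 := fun v =>
    hA.apply_apply_J_eq_zero hT hJ hdim
  have hxJJy : ⟪x, J (J y)⟫ = 0 := by rw [hJ.apply_apply, inner_neg_right, hxy, neg_zero]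
  have h := hq (J y + z) (by rw [inner_add_right, hxJy, hxz, add_zero])
    (by rw [map_add, inner_add_right, hxJJy, hxJz, add_zero])
  have hJy := hq (J y) hxJy hxJJy
  simp only [map_add, LinearMap.add_apply, hJ.apply_apply, map_neg, hq z hxz hxJz] at h hJy
  linarith [hT.symm x z x y]

lemma bisectional_eq_two_mul_sectional [FiniteDimensional ℝ V] (hdim : 4 < Module.finrank ℝ V)
    {x y : V} (hxy : ⟪x, y⟫ = 0) (hxJy : ⟪x, J y⟫ = 0) :
    T x (J x) y (J y) = 2 * T x y x y := by
  linarith [hT.bisectional_eq hJ x y, hA.apply_J_apply_J hT hJ hdim hxy hxJy hxy hxJy]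

lemma holSec_add_holSec [FiniteDimensional ℝ V] (hdim : 4 < Module.finrank ℝ V) {x y : V}
    (hx : ‖x‖ = 1) (hy : ‖y‖ = 1) (hxy : ⟪x, y⟫ = 0) (hxJy : ⟪x, J y⟫ = 0) :
    T x (J x) x (J x) + T y (J y) y (J y) = 8 * T x y x y := by
  have h₁ : ⟪x + y, x - y⟫ = 0 := by
    simp [inner_add_left, inner_sub_right, real_inner_comm x y, hx, hy, hxy]
  have h₂ : ⟪x + y, J (x - y)⟫ = 0 := by
    simp [inner_add_left, inner_sub_right, hJ.inner_self_apply, hJ.inner_apply_right y x, hxJy]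
  have h := hA.bisectional_eq_two_mul_sectional hT hJ hdim h₁ h₂
  simp only [map_add, map_sub, LinearMap.add_apply, LinearMap.sub_apply, hT.apply_self₁₂,
    hT.apply_self₃₄] at h
  linarith [hT.apply_J_apply_J_comm hJ x y, hA.apply_J_apply_J hT hJ hdim hxy hxJy hxy hxJy,
    hT.apply_J_apply_apply_J x y, hT.symm x (J y) x (J x), hT.symm y (J x) x (J x),
    hT.symm y (J x) y (J y), hT.symm x (J y) y (J y), hT.symm y (J x) x (J y),
    hT.symm y (J y) x (J x), hT.skew₂ x y y x, hT.skew₁ y x x y, hT.skew₁ y x y x]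

lemma holSec_eq_zero [FiniteDimensional ℝ V] {m : ℕ} (hm : 3 ≤ m)
    (hdim : Module.finrank ℝ V = 2 * m) (hric : ∀ y z, ricciT T y z = 0) (x : V) :
    T x (J x) x (J x) = 0 := by
  have hdim₄ : 4 < Module.finrank ℝ V := by omega
  suffices hunit : ∀ x : V, ‖x‖ = 1 → T x (J x) x (J x) = 0 by
    rcases eq_or_ne x 0 with rfl | hx
    · simp
    have h := hunit (‖x‖⁻¹ • x) (norm_smul_inv_norm hx)
    simpa [hx] using h
  intro x hx
  obtain ⟨e, he, i₀, rfl⟩ := exists_isAdaptedBasis hJ hdim (by omega) hx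
  have hnorm : ∀ i, ‖e i‖ = 1 := fun i => by
    simpa [real_inner_self_eq_norm_sq, pow_eq_one_iff_of_nonneg] using he.1 i i
  set μ : Fin m → ℝ := fun i => T (e i) (J (e i)) (e i) (J (e i))
  -- evaluate the Ricci trace `ricciT T (e i) (e i)` in the basis `e j, J (e j)`
  have hrow : ∀ i, ((m : ℝ) + 2) * μ i + ∑ j, μ j = 0 := by
    intro i
    have hterm : ∀ j, T (e j) (e i) (e i) (e j) + T (J (e j)) (e i) (e i) (J (e j)) =
        -((μ i + μ j) / 4 + if j = i then μ i / 2 else 0) := by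
      intro j
      rw [hT.symm (e j), hT.symm (J (e j)), hT.skew₂ (e i) (e j), hT.skew₂ (e i) (J (e j))]
      split_ifs with hji
      · subst hji
        simp only [hT.apply_self₁₂, μ]
        ring
      · have hij : ⟪e i, e j⟫ = 0 := by simp [he.1, Ne.symm hji]
        linarith [hA.apply_J_apply_J hT hJ hdim₄ hij (he.2 i j) hij (he.2 i j),
          hA.holSec_add_holSec hT hJ hdim₄ (hnorm i) (hnorm j) hij (he.2 i j)]
    have h := he.ricciT_eq_sum hJ hdim T (e i) (e i)
    simp only [hric, hterm, Finset.sum_neg_distrib, Finset.sum_add_distrib, ← Finset.sum_div,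
      Finset.sum_ite_eq', Finset.mem_univ, if_true, Finset.sum_const, Finset.card_univ,
      Fintype.card_fin, nsmul_eq_mul] at h
    linarith
  have hsum : ∑ j, μ j = 0 := by
    have h := Finset.sum_eq_zero (s := Finset.univ) fun i _ => hrow i
    simp only [Finset.sum_add_distrib, ← Finset.mul_sum, Finset.sum_const, Finset.card_univ,
      Fintype.card_fin, nsmul_eq_mul] at h
    nlinarith
  have h := hrow i₀
  rw [hsum, add_zero] at h
  exact (mul_eq_zero.mp h).resolve_left (by positivity)

lemma eq_zero [FiniteDimensional ℝ V] {m : ℕ} (hm : 3 ≤ m)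
    (hdim : Module.finrank ℝ V = 2 * m)
    (hric : ∀ y z, ricciT T y z = 0) : T = 0 :=
  hT.eq_zero_of_holSec_eq_zero hJ (hA.holSec_eq_zero hT hJ hm hdim hric)

end AntiholoIdentity

/-- A Kähler manifold of real dimension `2m ≥ 6` has vanishing Bochner
tensor iff `R(x,Jx,y,z) = 2 R(x,y,Jx,z)` for all unit vectors spanning an
antiholomorphic 3-plane, at every point. -/
theorem bochner_vanishes_iff_antiholo_identity
    {V : Type*} [NormedAddCommGroup V] [InnerProductSpace ℝ V]
    [FiniteDimensional ℝ V] {P : Type*}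
    (m : ℕ) (hm : 3 ≤ m) (hdim : Module.finrank ℝ V = 2 * m)
    (J : V →ₗ[ℝ] V) (hJ : IsComplexStructure J)
    (R : P → CurvTensor V) (hR : ∀ p, IsKahlerCurv J (R p)) :
    (∀ p x y z u, bochnerT m J (R p) x y z u = 0) ↔
      (∀ p (x y z : V), ‖x‖ = 1 → ‖y‖ = 1 → ‖z‖ = 1 → AntiholoTriple J x y z →
        R p x (J x) y z = 2 * R p x y (J x) z) := by
  constructor
  · intro hB p x y z _ _ _ hxyz
    refine (antiholoIdentity_bochnerTensor_iff (m := m) hJ).1 (fun x y z _ => ?_) x y z hxyz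
    simp [hB p]
  · intro hunit p x y z u
    have hA : AntiholoIdentity J (bochnerTensor m J (R p)) :=
      (antiholoIdentity_bochnerTensor_iff hJ).2 (antiholoIdentity_of_unit (hunit p))
    rw [← bochnerTensor_apply, hA.eq_zero (isKahlerCurv_bochnerTensor hJ (hR p)) hJ hm hdim
      (ricciT_bochnerTensor hJ (hR p) hdim)]
    rfl
end

section
/- Let (V, g, J) be a 2m-dimensional real inner product space with compatible complex structure, m ≥ 2, and let S be a symmetric bilinear form on V which is Hermitian, i.e. S(JX, JY) = S(X, Y). If S(y, z) = 0 for all vectors y, z with g(y,z) = 0 and g(y,Jz) = 0, then S = λ·g for some real number λ. -/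
open scoped RealInnerProductSpace

/-- A Hermitian symmetric bilinear form that vanishes on pairs
`(y,z)` with `g(y,z) = g(y,Jz) = 0` is a multiple of the metric. -/
theorem hermitian_form_is_multiple_of_metric
    {V : Type*} [NormedAddCommGroup V] [InnerProductSpace ℝ V]
    [FiniteDimensional ℝ V]
    (m : ℕ) (hm : 2 ≤ m) (hdim : Module.finrank ℝ V = 2 * m)
    (J : V →ₗ[ℝ] V) (hJ : IsComplexStructure J)
    (S : V →ₗ[ℝ] V →ₗ[ℝ] ℝ)
    (hsymm : ∀ x y, S x y = S y x)
    (hherm : ∀ x y, S (J x) (J y) = S x y)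
    (h0 : ∀ y z : V, ⟪y, z⟫ = 0 → ⟪y, J z⟫ = 0 → S y z = 0) :
    ∃ l : ℝ, ∀ x y : V, S x y = l * ⟪x, y⟫ := by
  obtain ⟨hJ2, hJg⟩ := hJ
  -- ⟪x, J y⟫ = -⟪J x, y⟫
  have hJx : ∀ x y : V, ⟪x, J y⟫ = -⟪J x, y⟫ := by
    intro x y
    have h := hJg (J x) y
    rw [hJ2, inner_neg_left] at h
    linarith
  have hxJx : ∀ x : V, ⟪x, J x⟫ = 0 := by
    intro x
    have h := hJx x x
    have h2 := real_inner_comm x (J x)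
    linarith
  have hSJ : ∀ x : V, S x (J x) = 0 := by
    intro x
    have h := hherm x (J x)
    rw [hJ2, map_neg] at h
    have h2 := hsymm (J x) x
    linarith
  -- the scaled comparison lemma
  have hB : ∀ x y : V, ⟪x, y⟫ = 0 → ⟪x, J y⟫ = 0 → ⟪y, y⟫ * S x x = ⟪x, x⟫ * S y y := by
    intro x y hxy hxJy
    set c : ℝ := Real.sqrt ⟪y, y⟫ with hc
    set d : ℝ := Real.sqrt ⟪x, x⟫ with hd
    have hc2 : c * c = ⟪y, y⟫ := Real.mul_self_sqrt real_inner_self_nonneg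
    have hd2 : d * d = ⟪x, x⟫ := Real.mul_self_sqrt real_inner_self_nonneg
    have hyJx : ⟪y, J x⟫ = 0 := by
      rw [hJx y x, real_inner_comm]; simpa using hxJy
    have h1 : ⟪c • x + d • y, c • x - d • y⟫ = 0 := by
      simp only [inner_add_left, inner_sub_right, real_inner_smul_left, real_inner_smul_right]
      rw [real_inner_comm y x]
      nlinarith [hc2, hd2]
    have h2 : ⟪c • x + d • y, J (c • x - d • y)⟫ = 0 := by
      rw [map_sub, map_smul, map_smul]
      simp only [inner_add_left, inner_sub_right, real_inner_smul_left, real_inner_smul_right]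
      rw [hxJx x, hxJx y, hxJy, hyJx]
      ring
    have h3 := h0 _ _ h1 h2
    have hxy0 : S x y = 0 := h0 x y hxy hxJy
    have hyx0 : S y x = 0 := by rw [hsymm]; exact hxy0
    simp only [map_add, map_sub, map_smul, LinearMap.add_apply, LinearMap.sub_apply,
      LinearMap.smul_apply, smul_eq_mul] at h3
    rw [hxy0, hyx0] at h3
    linear_combination h3 - S x x * hc2 + S y y * hd2
  -- pick a unit vector
  have hpos : 0 < Module.finrank ℝ V := by rw [hdim]; omega
  set e : V := stdOrthonormalBasis ℝ V ⟨0, hpos⟩ with he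
  have hee : ⟪e, e⟫ = 1 := by
    have hn := (stdOrthonormalBasis ℝ V).orthonormal.1 ⟨0, hpos⟩
    rw [real_inner_self_eq_norm_mul_norm, he, hn]; ring
  have hJeJe : ⟪J e, J e⟫ = 1 := by rw [hJg]; exact hee
  have heJe : ⟪e, J e⟫ = 0 := hxJx e
  have hJee : ⟪J e, e⟫ = 0 := by rw [real_inner_comm]; exact heJe
  have hSJeJe : S (J e) (J e) = S e e := hherm e e
  -- the quadratic form is S e e times the norm squared
  have hQ : ∀ x : V, S x x = S e e * ⟪x, x⟫ := by
    intro x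
    set a : ℝ := ⟪e, x⟫ with ha
    set b : ℝ := ⟪J e, x⟫ with hb
    set w : V := x - a • e - b • (J e) with hw
    have hew : ⟪e, w⟫ = 0 := by
      simp only [hw, inner_sub_right, real_inner_smul_right, hee, heJe]
      ring
    have hJew : ⟪J e, w⟫ = 0 := by
      simp only [hw, inner_sub_right, real_inner_smul_right, hJeJe, hJee]
      ring
    have heJw : ⟪e, J w⟫ = 0 := by
      rw [hJx e w, hJew]; ring
    have hJeJw : ⟪J e, J w⟫ = 0 := by rw [hJg]; exact hew
    have hSew : S e w = 0 := h0 e w hew heJw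
    have hSJew : S (J e) w = 0 := h0 (J e) w hJew hJeJw
    have hSww : ⟪w, w⟫ * S e e = S w w := by
      have := hB e w hew heJw
      rw [hee, one_mul] at this
      exact this
    have hxdecomp : x = a • e + b • (J e) + w := by rw [hw]; abel
    have hSee' : S e (J e) = 0 := hSJ e
    have hSJee' : S (J e) e = 0 := by rw [hsymm]; exact hSee'
    have hSwe : S w e = 0 := by rw [hsymm]; exact hSew
    have hSwJe : S w (J e) = 0 := by rw [hsymm]; exact hSJew
    have hwe : ⟪w, e⟫ = 0 := by rw [real_inner_comm]; exact hew
    have hwJe : ⟪w, J e⟫ = 0 := by rw [real_inner_comm]; exact hJew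
    have hwx : ⟪x, x⟫ = a * a + b * b + ⟪w, w⟫ := by
      conv_lhs => rw [hxdecomp]
      simp only [inner_add_left, inner_add_right, real_inner_smul_left, real_inner_smul_right,
        hee, hJeJe, heJe, hJee, hew, hJew, hwe, hwJe]
      ring
    calc S x x = S (a • e + b • (J e) + w) (a • e + b • (J e) + w) := by rw [← hxdecomp]
      _ = S e e * ⟪x, x⟫ := by
          simp only [map_add, map_smul, LinearMap.add_apply, LinearMap.smul_apply, smul_eq_mul,
            hSew, hSJew, hSwe, hSwJe, hSee', hSJee', hSJeJe]
          rw [hwx, ← hSww]; ring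
  refine ⟨S e e, fun x y => ?_⟩
  have h1 := hQ (x + y)
  have h2 := hQ x
  have h3 := hQ y
  simp only [map_add, LinearMap.add_apply, inner_add_left, inner_add_right] at h1
  rw [hsymm y x] at h1
  have hc := real_inner_comm x y
  linear_combination (h1 - h2 - h3) / 2 + S e e * hc / 2
end

section
/- Let (V, g, J) be a 2m-dimensional real inner product space with compatible complex structure, m ≥ 3, and let R be a Kähler-type algebraic curvature tensor. Define F(e_1,...,e_m) = Σ_{i=1}^m R(e_i, Je_i, Je_i, e_i) for J-adapted orthonormal bases. If F is independent of the choice of basis, then for all unit vectors x, y, z spanning an antiholomorphic 3-plane, R(x, Jx, y, z) = 2 R(x, y, Jx, z). -/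
open scoped RealInnerProductSpace

/-! Write `Q v = R(v, Jv, Jv, v)` (`holQuartic`). An orthonormal pair `u, w` with
`Ju, Jw ⟂ u, w` extends to a `J`-adapted basis, and rotating the pair inside its plane gives
another adapted basis with the same complement; so basis independence makes
`Q(cu + sw) + Q(-su + cw)` independent of the angle. Since `(a, b, c, d) ↦ R(a, Jb, Jc, d)` has
the symmetries of the square, this quartic in `(c, s)` has only three mixed coefficients, and
comparing two angles gives two identities per pair. Applied to `(x, (3y + 4Jz)/5)` and the pairs
it is built from, they give `R(x,Jx,Jy,Jz) + 2R(x,Jy,Jx,Jz) = R(y,Jy,Jy,Jz)`. Adding the same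
identity for `(x, z, Jy)`, the right-hand sides cancel and the first Bianchi identity turns the
sum into the claim. -/

section

variable {V : Type*} [NormedAddCommGroup V] [InnerProductSpace ℝ V] {J : V →ₗ[ℝ] V}

namespace IsComplexStructure

theorem inner_map_left (hJ : IsComplexStructure J) (a b : V) : ⟪J a, b⟫ = -⟪a, J b⟫ := by
  have h := hJ.2 a (J b)
  rw [hJ.1, inner_neg_right] at h
  linarith

theorem inner_map_comm (hJ : IsComplexStructure J) (a b : V) : ⟪a, J b⟫ = -⟪b, J a⟫ := by
  rw [← hJ.inner_map_left, real_inner_comm]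

theorem inner_self_map (hJ : IsComplexStructure J) (a : V) : ⟪a, J a⟫ = 0 := by
  linarith [hJ.inner_map_comm a a]

end IsComplexStructure

theorem exists_norm_eq_one_forall_inner_eq_zero [FiniteDimensional ℝ V] {ι : Type*} [Fintype ι]
    (f : ι → V) (hf : Fintype.card ι < Module.finrank ℝ V) :
    ∃ w : V, ‖w‖ = 1 ∧ ∀ i, ⟪f i, w⟫ = 0 := by
  set S := Submodule.span ℝ (Set.range f)
  have hS : S ≠ ⊤ := fun h => by
    have : Module.finrank ℝ S ≤ Fintype.card ι := finrank_range_le_card f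
    rw [h, finrank_top] at this
    omega
  obtain ⟨v, hv, hv0⟩ :=
    Submodule.exists_mem_ne_zero_of_ne_bot (Submodule.orthogonal_eq_bot_iff.not.2 hS)
  refine ⟨‖v‖⁻¹ • v, norm_smul_inv_norm hv0, fun i => ?_⟩
  rw [real_inner_smul_right,
    (Submodule.mem_orthogonal S v).1 hv _ (Submodule.subset_span ⟨i, rfl⟩), mul_zero]

theorem isAdaptedBasis_pair_iff (hJ : IsComplexStructure J) {u w : V} :
    IsAdaptedBasis J ![u, w] ↔ ⟪u, u⟫ = 1 ∧ ⟪w, w⟫ = 1 ∧ ⟪u, w⟫ = 0 ∧ ⟪u, J w⟫ = 0 := by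
  constructor
  · rintro ⟨h1, h2⟩
    exact ⟨by simpa using h1 0 0, by simpa using h1 1 1, by simpa using h1 0 1,
      by simpa using h2 0 1⟩
  · rintro ⟨huu, hww, huw, huJw⟩
    constructor <;> intro i j <;> fin_cases i <;> fin_cases j <;>
      simp [-inner_self_eq_norm_sq_to_K, huu, hww, huw, huJw, real_inner_comm u w,
        hJ.inner_self_map, hJ.inner_map_comm w u]

theorem IsAdaptedBasis.append (hJ : IsComplexStructure J) {k n : ℕ} {p : Fin k → V}
    {t : Fin n → V} (hp : IsAdaptedBasis J p) (ht : IsAdaptedBasis J t)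
    (hpt : ∀ i j, ⟪p i, t j⟫ = 0 ∧ ⟪p i, J (t j)⟫ = 0) :
    IsAdaptedBasis J (Fin.append p t) := by
  have hne : ∀ i j, Fin.castAdd n i ≠ Fin.natAdd k j := fun i j h => by
    have := congrArg Fin.val h
    simp at this
    omega
  constructor <;> intro i j <;> refine Fin.addCases (fun i => ?_) (fun i => ?_) i <;>
    refine Fin.addCases (fun j => ?_) (fun j => ?_) j <;>
    simp [hp.1, hp.2, ht.1, ht.2, hpt, hne, (hne _ _).symm, real_inner_comm (p _),
      hJ.inner_map_comm (t _)]

theorem IsAdaptedBasis.exists_complement [FiniteDimensional ℝ V] (hJ : IsComplexStructure J)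
    {k : ℕ} {p : Fin k → V} (hp : IsAdaptedBasis J p) :
    ∀ n, 2 * (k + n) ≤ Module.finrank ℝ V → ∃ t : Fin n → V,
      IsAdaptedBasis J t ∧ ∀ i j, ⟪p i, t j⟫ = 0 ∧ ⟪p i, J (t j)⟫ = 0
  | 0, _ => ⟨Fin.elim0, ⟨fun i => i.elim0, fun i => i.elim0⟩, fun _ j => j.elim0⟩
  | n + 1, hn => by
    obtain ⟨t, ht, hpt⟩ := hp.exists_complement hJ n (by omega)
    obtain ⟨w, hw, hfw⟩ := exists_norm_eq_one_forall_inner_eq_zero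
      (Sum.elim (Fin.append p t) (J ∘ Fin.append p t)) (by simp; omega)
    have hpw : ∀ i, ⟪p i, w⟫ = 0 ∧ ⟪J (p i), w⟫ = 0 := fun i => by
      simpa using And.intro (hfw (.inl (Fin.castAdd n i))) (hfw (.inr (Fin.castAdd n i)))
    have htw : ∀ j, ⟪t j, w⟫ = 0 ∧ ⟪J (t j), w⟫ = 0 := fun j => by
      simpa using And.intro (hfw (.inl (Fin.natAdd k j))) (hfw (.inr (Fin.natAdd k j)))
    have hw' : IsAdaptedBasis J fun _ : Fin 1 => w := by
      constructor <;> intro i j <;>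
        simp [Subsingleton.elim i j, hJ.inner_self_map, hw]
    refine ⟨Fin.append t fun _ => w, ht.append hJ hw' fun j _ => ?_, fun i j => ?_⟩
    · simp [(htw j).1, hJ.inner_map_comm (t j), real_inner_comm (J (t j)) w, (htw j).2]
    · refine Fin.addCases (fun j => ?_) (fun j => ?_) j
      · simpa using hpt i j
      · simp [(hpw i).1, hJ.inner_map_comm (p i), real_inner_comm (J (p i)) w, (hpw i).2]

theorem IsAdaptedBasis.pair_swap (hJ : IsComplexStructure J) {u w : V}
    (h : IsAdaptedBasis J ![u, w]) : IsAdaptedBasis J ![w, u] := by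
  obtain ⟨huu, hww, huw, huJw⟩ := (isAdaptedBasis_pair_iff hJ).1 h
  refine (isAdaptedBasis_pair_iff hJ).2 ⟨hww, huu, ?_, ?_⟩
  · rw [real_inner_comm, huw]
  · rw [hJ.inner_map_comm, huJw, neg_zero]

theorem IsAdaptedBasis.pair_map_right (hJ : IsComplexStructure J) {u w : V}
    (h : IsAdaptedBasis J ![u, w]) : IsAdaptedBasis J ![u, J w] := by
  obtain ⟨huu, hww, huw, huJw⟩ := (isAdaptedBasis_pair_iff hJ).1 h
  refine (isAdaptedBasis_pair_iff hJ).2 ⟨huu, ?_, huJw, ?_⟩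
  · rw [hJ.2, hww]
  · rw [hJ.1, inner_neg_right, huw, neg_zero]

def holQuartic (J : V →ₗ[ℝ] V) (R : CurvTensor V) (v : V) : ℝ :=
  R v (J v) (J v) v

theorem sum_holQuartic_eq_of_append {R : CurvTensor V} {k n : ℕ}
    (hF : ∀ e f : Fin (k + n) → V, IsAdaptedBasis J e → IsAdaptedBasis J f →
      ∑ i, holQuartic J R (e i) = ∑ i, holQuartic J R (f i))
    (hJ : IsComplexStructure J) {p q : Fin k → V} {t : Fin n → V}
    (hp : IsAdaptedBasis J p) (hq : IsAdaptedBasis J q) (ht : IsAdaptedBasis J t)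
    (hpt : ∀ i j, ⟪p i, t j⟫ = 0 ∧ ⟪p i, J (t j)⟫ = 0)
    (hqt : ∀ i j, ⟪q i, t j⟫ = 0 ∧ ⟪q i, J (t j)⟫ = 0) :
    ∑ i, holQuartic J R (p i) = ∑ i, holQuartic J R (q i) := by
  simpa [Fin.sum_univ_add] using hF _ _ (hp.append hJ ht hpt) (hq.append hJ ht hqt)

def IsRotationInvariant (J : V →ₗ[ℝ] V) (R : CurvTensor V) : Prop :=
  ∀ u w, IsAdaptedBasis J ![u, w] → ∀ c s : ℝ, c ^ 2 + s ^ 2 = 1 →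
    holQuartic J R (c • u + s • w) + holQuartic J R ((-s) • u + c • w) =
      holQuartic J R u + holQuartic J R w

theorem isRotationInvariant_of_basis_independent [FiniteDimensional ℝ V]
    (hJ : IsComplexStructure J) {R : CurvTensor V} {m : ℕ} (hm : 2 ≤ m)
    (hdim : Module.finrank ℝ V = 2 * m)
    (hF : ∀ e f : Fin m → V, IsAdaptedBasis J e → IsAdaptedBasis J f →
      ∑ i, holQuartic J R (e i) = ∑ i, holQuartic J R (f i)) :
    IsRotationInvariant J R := by
  intro u w huw c s hcs
  obtain ⟨n, rfl⟩ : ∃ n, m = 2 + n := ⟨m - 2, by omega⟩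
  obtain ⟨t, ht, hpt⟩ := huw.exists_complement hJ n hdim.ge
  obtain ⟨huu, hww, huw', huJw⟩ := (isAdaptedBasis_pair_iff hJ).1 huw
  have hwJu : ⟪w, J u⟫ = 0 := by rw [hJ.inner_map_comm, huJw, neg_zero]
  have hq : IsAdaptedBasis J ![c • u + s • w, (-s) • u + c • w] := by
    refine (isAdaptedBasis_pair_iff hJ).2 ⟨?_, ?_, ?_, ?_⟩ <;>
      simp only [inner_add_left, inner_add_right, real_inner_smul_left, real_inner_smul_right,
        map_add, map_smul, huu, hww, huw', huJw, hwJu, real_inner_comm u w, hJ.inner_self_map]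
    · linear_combination hcs
    · linear_combination hcs
    · ring
    · ring
  have hqt : ∀ i j, ⟪![c • u + s • w, (-s) • u + c • w] i, t j⟫ = 0 ∧
      ⟪![c • u + s • w, (-s) • u + c • w] i, J (t j)⟫ = 0 := by
    intro i j
    obtain ⟨h1, h2⟩ := hpt 0 j
    obtain ⟨h3, h4⟩ := hpt 1 j
    simp only [Matrix.cons_val_zero, Matrix.cons_val_one] at h1 h2 h3 h4
    fin_cases i <;> simp [inner_add_left, real_inner_smul_left, h1, h2, h3, h4]
  simpa [Fin.sum_univ_two, add_comm] using
    (sum_holQuartic_eq_of_append hF hJ huw hq ht hpt hqt).symm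

namespace IsKahlerCurv

variable {R : CurvTensor V}

theorem map_third_eq_neg_map_fourth (hJ : IsComplexStructure J) (hR : IsKahlerCurv J R)
    (a b c d : V) : R a b (J c) d = -R a b c (J d) := by
  rw [hR.kahler a b c (J d), hJ.1, map_neg, neg_neg]

theorem map_comm12 (hJ : IsComplexStructure J) (hR : IsKahlerCurv J R) (a b c d : V) :
    R b (J a) (J c) d = R a (J b) (J c) d := by
  linarith [hR.symm b (J a) (J c) d, hR.symm a (J b) (J c) d,
    hR.map_third_eq_neg_map_fourth hJ (J c) d a b, hR.skew₂ (J c) d (J a) b]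

theorem map_comm34 (hJ : IsComplexStructure J) (hR : IsKahlerCurv J R) (a b c d : V) :
    R a (J b) (J d) c = R a (J b) (J c) d := by
  linarith [hR.map_third_eq_neg_map_fourth hJ a (J b) d c, hR.skew₂ a (J b) (J c) d]

theorem map_pair_comm (hJ : IsComplexStructure J) (hR : IsKahlerCurv J R) (a b c d : V) :
    R c (J d) (J a) b = R a (J b) (J c) d := by
  linarith [hR.map_third_eq_neg_map_fourth hJ c (J d) a b, hR.symm c (J d) a (J b),
    hR.map_third_eq_neg_map_fourth hJ a (J b) c d]

theorem holQuartic_smul_add_smul (hJ : IsComplexStructure J) (hR : IsKahlerCurv J R)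
    (c s : ℝ) (u w : V) :
    holQuartic J R (c • u + s • w) =
      c ^ 4 * holQuartic J R u + 4 * c ^ 3 * s * R u (J u) (J u) w
      + c ^ 2 * s ^ 2 * (2 * R u (J u) (J w) w + 4 * R u (J w) (J u) w)
      + 4 * c * s ^ 3 * R w (J w) (J w) u + s ^ 4 * holQuartic J R w := by
  simp only [holQuartic, map_add, map_smul, LinearMap.add_apply, LinearMap.smul_apply,
    smul_eq_mul]
  simp only [hR.map_comm12 hJ, hR.map_comm34 hJ, hR.map_pair_comm hJ]
  ring

theorem pair_identities (hJ : IsComplexStructure J) (hR : IsKahlerCurv J R)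
    (hrot : IsRotationInvariant J R) {u w : V} (huw : IsAdaptedBasis J ![u, w]) :
    R u (J u) (J u) w = R w (J w) (J w) u ∧
      2 * R u (J u) (J w) w + 4 * R u (J w) (J u) w = holQuartic J R u + holQuartic J R w := by
  -- any angle with `cs(c² - s²) ≠ 0` would do
  have h₁ := hrot u w huw (3 / 5) (4 / 5) (by norm_num)
  have h₂ := hrot u w huw (4 / 5) (3 / 5) (by norm_num)
  simp only [hR.holQuartic_smul_add_smul hJ] at h₁ h₂
  constructor
  · linear_combination (625 / 672) * (h₂ - h₁)
  · linear_combination (625 / 576) * (h₁ + h₂)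

theorem mixed_identity (hJ : IsComplexStructure J) (hR : IsKahlerCurv J R)
    (hrot : IsRotationInvariant J R) {u a b : V} (hua : IsAdaptedBasis J ![u, a])
    (hub : IsAdaptedBasis J ![u, b]) (hab : IsAdaptedBasis J ![a, b]) :
    R u (J u) (J a) b + 2 * R u (J a) (J u) b = R a (J a) (J a) b := by
  obtain ⟨huu, haa, hua₁, hua₂⟩ := (isAdaptedBasis_pair_iff hJ).1 hua
  obtain ⟨-, hbb, hub₁, hub₂⟩ := (isAdaptedBasis_pair_iff hJ).1 hub
  obtain ⟨-, -, hab₁, -⟩ := (isAdaptedBasis_pair_iff hJ).1 hab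
  have huv : IsAdaptedBasis J ![u, (3 / 5 : ℝ) • a + (4 / 5 : ℝ) • b] := by
    refine (isAdaptedBasis_pair_iff hJ).2 ⟨huu, ?_, ?_, ?_⟩ <;>
      simp only [inner_add_left, inner_add_right, real_inner_smul_left, real_inner_smul_right,
        map_add, map_smul, haa, hbb, hab₁, real_inner_comm a b, hua₁, hua₂, hub₁, hub₂] <;>
      norm_num
  have hv := (pair_identities hJ hR hrot huv).2
  have hua' := (pair_identities hJ hR hrot hua).2
  have hub' := (pair_identities hJ hR hrot hub).2
  obtain ⟨hA, hB⟩ := pair_identities hJ hR hrot hab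
  rw [hR.holQuartic_smul_add_smul hJ] at hv
  simp only [map_add, map_smul, LinearMap.add_apply, LinearMap.smul_apply, smul_eq_mul] at hv
  simp only [hR.map_comm34 hJ, hR.map_pair_comm hJ] at hv hua' hub' hA hB ⊢
  -- the `cs`-part of `hv` once the identities of `(u, a)`, `(u, b)`, `(a, b)` are subtracted
  linear_combination (25 / 48) * (hv - (9 / 25) * hua' - (16 / 25) * hub' + (144 / 625) * hB
    - (768 / 625) * hA)

theorem antiholo_identity (hJ : IsComplexStructure J) (hR : IsKahlerCurv J R)
    (hrot : IsRotationInvariant J R) {x y z : V} (hxy : IsAdaptedBasis J ![x, y])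
    (hxz : IsAdaptedBasis J ![x, z]) (hyz : IsAdaptedBasis J ![y, z]) :
    R x (J x) y z = 2 * R x y (J x) z := by
  have h₁ := hR.mixed_identity hJ hrot hxy (hxz.pair_map_right hJ) (hyz.pair_map_right hJ)
  have h₂ := hR.mixed_identity hJ hrot hxz (hxy.pair_map_right hJ)
    ((hyz.pair_swap hJ).pair_map_right hJ)
  have h₃ := (hR.pair_identities hJ hrot (hyz.pair_map_right hJ)).1
  simp only [hJ.1, map_neg, LinearMap.neg_apply, neg_neg] at h₁ h₂ h₃
  linarith [hR.kahler x (J x) y z, hR.kahler x (J y) x z, hR.kahler x (J x) z y,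
    hR.kahler x (J z) x y, hR.kahler z (J z) z y, hR.skew₁ (J z) z z y,
    hR.symm x (J y) x z, hR.map_third_eq_neg_map_fourth hJ x z x y, hR.symm x z (J x) y,
    hR.bianchi x (J x) y z, hR.skew₁ y x (J x) z, hR.symm x (J z) x y,
    hR.map_third_eq_neg_map_fourth hJ x y x z, hR.skew₂ x (J x) z y]

end IsKahlerCurv

end

/-- If the sum `F(e₁,…,eₘ) = Σᵢ R(eᵢ,Jeᵢ,Jeᵢ,eᵢ)` is independent
of the `J`-adapted orthonormal basis, then `R(x,Jx,y,z) = 2·R(x,y,Jx,z)` for every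
unit antiholomorphic triple. -/
theorem antiholo_identity_of_basis_independence
    {V : Type*} [NormedAddCommGroup V] [InnerProductSpace ℝ V]
    [FiniteDimensional ℝ V]
    (m : ℕ) (hm : 3 ≤ m) (hdim : Module.finrank ℝ V = 2 * m)
    (J : V →ₗ[ℝ] V) (hJ : IsComplexStructure J)
    (R : CurvTensor V) (hR : IsKahlerCurv J R)
    (hF : ∀ e f : Fin m → V, IsAdaptedBasis J e → IsAdaptedBasis J f →
      ∑ i, R (e i) (J (e i)) (J (e i)) (e i) =
        ∑ i, R (f i) (J (f i)) (J (f i)) (f i)) :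
    ∀ x y z : V, ‖x‖ = 1 → ‖y‖ = 1 → ‖z‖ = 1 → AntiholoTriple J x y z →
      R x (J x) y z = 2 * R x y (J x) z := by
  rintro x y z hx hy hz ⟨hxy, hxz, hyz, -, -, -, hxJy, hxJz, hyJz⟩
  have hrot := isRotationInvariant_of_basis_independent hJ (by omega) hdim hF
  have inner_self : ∀ v : V, ‖v‖ = 1 → ⟪v, v⟫ = 1 := fun v hv => by
    rw [real_inner_self_eq_norm_sq, hv, one_pow]
  exact hR.antiholo_identity hJ hrot
    ((isAdaptedBasis_pair_iff hJ).2 ⟨inner_self x hx, inner_self y hy, hxy, hxJy⟩)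
    ((isAdaptedBasis_pair_iff hJ).2 ⟨inner_self x hx, inner_self z hz, hxz, hxJz⟩)
    ((isAdaptedBasis_pair_iff hJ).2 ⟨inner_self y hy, inner_self z hz, hyz, hyJz⟩)
end
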